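/- Let K be a field, n ≥ 2, let v_1,…,v_m be monomials in K[x_2,…,x_n] (i.e. monomials of S = K[x_1,…,x_n] not involving x_1), and let a be a positive integer. Then the monomial ideals I = (x_1^a v_1, v_2, …, v_m) and I' = (x_1^{a+1} v_1, v_2, …, v_m) of S satisfy sdepth(I) = sdepth(I'). -/

import Mathlib

open MvPolynomial

/-- The Stanley space `u K[Z]`: the `K`-span of all monomials `x^(u+τ)` with
`supp τ ⊆ Z`. -/
noncomputable def StanleySpace (K : Type*) [Field K] {n : ℕ} (u : Fin n →₀ ℕ) (Z : Finset (Fin n)) :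
    Submodule K (MvPolynomial (Fin n) K) :=
  Submodule.span K {p | ∃ τ : Fin n →₀ ℕ, (τ.support : Set (Fin n)) ⊆ Z ∧
    p = monomial (u + τ) (1 : K)}

/-- A Stanley decomposition of a monomial ideal `I`: a finite family of Stanley spaces
`u_i K[Z_i]` with `u_i` a monomial of `I`, whose internal direct sum is `I`
(as a `K`-vector space). -/
structure StanleyDecomposition (K : Type*) [Field K] {n : ℕ}
    (I : Ideal (MvPolynomial (Fin n) K)) where
  r : ℕ
  rpos : 0 < r
  u : Fin r → (Fin n →₀ ℕ)
  Z : Fin r → Finset (Fin n)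
  mem : ∀ i, monomial (u i) (1 : K) ∈ I
  isSup : Submodule.restrictScalars K I = ⨆ i, StanleySpace K (u i) (Z i)
  indep : iSupIndep fun i => StanleySpace K (u i) (Z i)

/-- `sdepth 𝒟 = min_i |Z_i|`. -/
def StanleyDecomposition.sdepth {K : Type*} [Field K] {n : ℕ}
    {I : Ideal (MvPolynomial (Fin n) K)} (D : StanleyDecomposition K I) : ℕ :=
  Finset.univ.inf' ⟨⟨0, D.rpos⟩, Finset.mem_univ _⟩ fun i => (D.Z i).card

/-- The Stanley depth of a monomial ideal: the maximum of `sdepth 𝒟` over all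
Stanley decompositions `𝒟` of `I`. -/
noncomputable def Ideal.sdepth (K : Type*) [Field K] {n : ℕ}
    (I : Ideal (MvPolynomial (Fin n) K)) : ℕ :=
  sSup (Set.range fun D : StanleyDecomposition K I => D.sdepth)

/-!
A Stanley decomposition of a monomial ideal is the same as a partition of its set of exponents
into finitely many cones `u + ℕ^Z`. Let `g : ℕ → ℕ` be monotone and unbounded, and let `f` act on
exponents by replacing the `x₁`-coordinate `t` with `g t`. The `f`-preimage of a cone `u + ℕ^Z` is
a finite disjoint union of cones with the same `Z` (under `g`, a ray pulls back to a ray and a point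
to a finite set of points), so pulling a partition back along `f` does not lower its Stanley depth.
The exponents of `(x₁^(a+1) v₁, v₂, …, vₘ)` are the `f`-preimage of those of
`(x₁^a v₁, v₂, …, vₘ)` for `g t = t - 1` on `t ≥ a` (and `g t = t` below `a`), and conversely
for `g t = t + 1` on `t ≥ a`.
-/

open Filter Set

section Axis

variable {g : ℕ → ℕ}

def stanleyAxis (p : Prop) [Decidable p] (k : ℕ) : Set ℕ :=
  if p then Ici k else {k}

theorem Monotone.exists_preimage_Ici_eq (hg : Monotone g) (hg' : Tendsto g atTop atTop)
    (k : ℕ) : ∃ k', g ⁻¹' Ici k = Ici k' := by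
  classical
  have hex : ∃ t, k ≤ g t := (hg'.eventually_ge_atTop k).exists
  refine ⟨Nat.find hex, Set.ext fun t => ⟨fun ht => Nat.find_min' hex ht, fun ht => ?_⟩⟩
  exact (Nat.find_spec hex).trans (hg ht)

theorem Filter.Tendsto.finite_preimage_singleton (hg : Tendsto g atTop atTop) (k : ℕ) :
    (g ⁻¹' {k}).Finite := by
  have h := hg.eventually_gt_atTop k
  rw [← Nat.cofinite_eq_atTop, eventually_cofinite] at h
  exact h.subset fun t ht => by simp_all

theorem exists_preimage_stanleyAxis (hg : Monotone g) (hg' : Tendsto g atTop atTop)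
    (p : Prop) [Decidable p] (k : ℕ) :
    ∃ T : Finset ℕ, g ⁻¹' stanleyAxis p k = ⋃ t ∈ T, stanleyAxis p t ∧
      (T : Set ℕ).PairwiseDisjoint (stanleyAxis p) := by
  by_cases hp : p
  · obtain ⟨k', hk'⟩ := hg.exists_preimage_Ici_eq hg' k
    refine ⟨{k'}, ?_, by simp⟩
    simp [stanleyAxis, hp, hk']
  · classical
    refine ⟨(hg'.finite_preimage_singleton k).toFinset, ?_, ?_⟩
    · ext t
      simp [stanleyAxis, hp]
    · intro s _ t _ hst
      simpa [Function.onFun, stanleyAxis, hp] using hst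

end Axis

section Cone

variable {σ : Type*} [DecidableEq σ]

def stanleyCone (u : σ →₀ ℕ) (Z : Finset σ) : Set (σ →₀ ℕ) :=
  {c | ∀ j, c j ∈ stanleyAxis (j ∈ Z) (u j)}

theorem self_mem_stanleyCone (u : σ →₀ ℕ) (Z : Finset σ) : u ∈ stanleyCone u Z := fun j => by
  by_cases j ∈ Z <;> simp_all [stanleyAxis]

theorem stanleyCone_eq_image (u : σ →₀ ℕ) (Z : Finset σ) :
    stanleyCone u Z = (u + ·) '' {τ | (τ.support : Set σ) ⊆ Z} := by
  ext c
  constructor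
  · intro hc
    refine ⟨c - u, fun j hj => ?_, ?_⟩
    · have := hc j
      by_contra hjZ
      simp_all [stanleyAxis]
    · ext j
      have := hc j
      simp only [stanleyAxis] at this
      split_ifs at this <;> simp_all
  · rintro ⟨τ, hτ, rfl⟩ j
    by_cases hj : j ∈ Z
    · simp [stanleyAxis, hj]
    · have : τ j = 0 := Finsupp.notMem_support_iff.mp fun h => hj (hτ h)
      simp [stanleyAxis, hj, this]

theorem update_mem_stanleyCone_iff {c u : σ →₀ ℕ} {Z : Finset σ} {x : σ} {t : ℕ} :
    c.update x t ∈ stanleyCone u Z ↔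
      t ∈ stanleyAxis (x ∈ Z) (u x) ∧ ∀ j ≠ x, c j ∈ stanleyAxis (j ∈ Z) (u j) := by
  simp only [stanleyCone, mem_ofPred_eq, Finsupp.coe_update]
  exact Function.forall_update_iff c fun j s => s ∈ stanleyAxis (j ∈ Z) (u j)

theorem mem_stanleyCone_update_iff {c u : σ →₀ ℕ} {Z : Finset σ} {x : σ} {t : ℕ} :
    c ∈ stanleyCone (u.update x t) Z ↔
      c x ∈ stanleyAxis (x ∈ Z) t ∧ ∀ j ≠ x, c j ∈ stanleyAxis (j ∈ Z) (u j) := by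
  simp only [stanleyCone, mem_ofPred_eq, Finsupp.coe_update]
  exact Function.forall_update_iff u fun j s => c j ∈ stanleyAxis (j ∈ Z) s

end Cone

section Partition

variable {σ : Type*} [DecidableEq σ] {g : ℕ → ℕ}

theorem exists_preimage_update_stanleyCone (hg : Monotone g) (hg' : Tendsto g atTop atTop)
    (x : σ) (u : σ →₀ ℕ) (Z : Finset σ) :
    ∃ T : Finset ℕ, (fun c => c.update x (g (c x))) ⁻¹' stanleyCone u Z =
        ⋃ t ∈ T, stanleyCone (u.update x t) Z ∧
      (T : Set ℕ).PairwiseDisjoint fun t => stanleyCone (u.update x t) Z := by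
  obtain ⟨T, hT, hTdisj⟩ := exists_preimage_stanleyAxis hg hg' (x ∈ Z) (u x)
  refine ⟨T, ?_, fun s hs t ht hst => ?_⟩
  · ext c
    have hcx : g (c x) ∈ stanleyAxis (x ∈ Z) (u x) ↔ ∃ t ∈ T, c x ∈ stanleyAxis (x ∈ Z) t := by
      rw [← mem_preimage, hT]
      simp
    simp only [mem_preimage, update_mem_stanleyCone_iff, mem_iUnion, mem_stanleyCone_update_iff,
      hcx, exists_prop]
    exact ⟨fun ⟨⟨t, ht, hx⟩, hj⟩ => ⟨t, ht, hx, hj⟩, fun ⟨t, ht, hx, hj⟩ => ⟨⟨t, ht, hx⟩, hj⟩⟩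
  · refine Set.disjoint_left.mpr fun c hs' ht' => ?_
    exact Set.disjoint_left.mp (hTdisj hs ht hst) (mem_stanleyCone_update_iff.mp hs').1
      (mem_stanleyCone_update_iff.mp ht').1

def HasStanleyPartition (M : Set (σ →₀ ℕ)) (d : ℕ) : Prop :=
  ∃ P : Finset ((σ →₀ ℕ) × Finset σ), (∀ p ∈ P, d ≤ p.2.card) ∧
    M = ⋃ p ∈ P, stanleyCone p.1 p.2 ∧
    (P : Set ((σ →₀ ℕ) × Finset σ)).PairwiseDisjoint fun p => stanleyCone p.1 p.2

theorem HasStanleyPartition.preimage_update {M : Set (σ →₀ ℕ)} {d : ℕ}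
    (hM : HasStanleyPartition M d) (hg : Monotone g) (hg' : Tendsto g atTop atTop) (x : σ) :
    HasStanleyPartition ((fun c => c.update x (g (c x))) ⁻¹' M) d := by
  obtain ⟨P, hPd, rfl, hPdisj⟩ := hM
  choose T hT hTdisj using fun p : (σ →₀ ℕ) × Finset σ =>
    exists_preimage_update_stanleyCone hg hg' x p.1 p.2
  let piece (p : (σ →₀ ℕ) × Finset σ) (t : ℕ) : (σ →₀ ℕ) × Finset σ := (p.1.update x t, p.2)
  have hpiece (p) : ((T p).image (piece p) : Set ((σ →₀ ℕ) × Finset σ)).PairwiseDisjoint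
      fun q => stanleyCone q.1 q.2 := by
    rw [Finset.coe_image, Set.InjOn.pairwiseDisjoint_image]
    · exact hTdisj p
    · intro s _ t _ hst
      simpa [piece] using congrArg (fun q => q.1 x) hst
  have hsup (p) : ((T p).image (piece p)).sup (fun q => stanleyCone q.1 q.2) =
      (fun c => c.update x (g (c x))) ⁻¹' stanleyCone p.1 p.2 := by
    rw [Finset.sup_set_eq_biUnion, Finset.set_biUnion_finset_image, hT]
  refine ⟨P.biUnion fun p => (T p).image (piece p), ?_, ?_, ?_⟩
  · simp only [Finset.mem_biUnion, Finset.mem_image]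
    rintro _ ⟨p, hp, t, -, rfl⟩
    exact hPd p hp
  · rw [preimage_iUnion₂, Finset.set_biUnion_biUnion]
    exact iUnion₂_congr fun p _ => by rw [← hsup, Finset.sup_set_eq_biUnion]
  · rw [Finset.coe_biUnion]
    refine Set.PairwiseDisjoint.biUnion_finset ?_ fun p _ => hpiece p
    intro p hp q hq hpq
    simpa only [Function.onFun, hsup] using (hPdisj hp hq hpq).preimage _

end Partition

namespace MvPolynomial

variable {σ R : Type*}

theorem restrictSupport_injective [CommSemiring R] [Nontrivial R] :
    Function.Injective (restrictSupport (σ := σ) R) := by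
  intro s t hst
  ext m
  simpa using congrArg (monomial m (1 : R) ∈ ·) hst

theorem restrictSupport_iUnion [CommSemiring R] {ι : Sort*} (s : ι → Set (σ →₀ ℕ)) :
    restrictSupport R (⋃ i, s i) = ⨆ i, restrictSupport R (s i) := by
  simp only [restrictSupport_eq_span, Set.image_iUnion, Submodule.span_iUnion]

theorem disjoint_restrictSupport_iff [CommSemiring R] [Nontrivial R] {s t : Set (σ →₀ ℕ)} :
    Disjoint (restrictSupport R s) (restrictSupport R t) ↔ Disjoint s t := by
  refine ⟨fun h => Set.disjoint_left.mpr fun m hs ht => ?_,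
    fun h => Submodule.disjoint_def.mpr fun p hs ht => ?_⟩
  · have := Submodule.disjoint_def.mp h (monomial m (1 : R))
      ((monomial_mem_restrictSupport R).mpr (Or.inl hs))
      ((monomial_mem_restrictSupport R).mpr (Or.inl ht))
    simp at this
  · rw [mem_restrictSupport_iff] at hs ht
    rw [← support_eq_empty, ← Finset.coe_eq_empty, ← Set.subset_empty_iff]
    exact (Set.subset_inter hs ht).trans (Set.disjoint_iff.mp h)

theorem iSupIndep_restrictSupport_iff [CommSemiring R] [Nontrivial R] {ι : Type*}
    {s : ι → Set (σ →₀ ℕ)} :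
    iSupIndep (fun i => restrictSupport R (s i)) ↔ Pairwise (Function.onFun Disjoint s) := by
  rw [← iSupIndep_iff_pairwiseDisjoint, iSupIndep_def, iSupIndep_def]
  refine forall_congr' fun i => ?_
  simp only [← restrictSupport_iUnion]
  exact disjoint_restrictSupport_iff

theorem restrictScalars_span_monomial_image [CommRing R] (S : Set (σ →₀ ℕ)) :
    (Ideal.span ((monomial · (1 : R)) '' S)).restrictScalars R =
      restrictSupport R {c | ∃ s ∈ S, s ≤ c} := by
  ext p
  simp [mem_ideal_span_monomial_image, mem_restrictSupport_iff, Set.subset_def]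

end MvPolynomial

open MvPolynomial

theorem stanleySpace_eq_restrictSupport (K : Type*) [Field K] {n : ℕ} (u : Fin n →₀ ℕ)
    (Z : Finset (Fin n)) : StanleySpace K u Z = restrictSupport K (stanleyCone u Z) := by
  rw [StanleySpace, restrictSupport_eq_span, stanleyCone_eq_image, Set.image_image]
  congr 1
  ext p
  simp [eq_comm]

section Decomposition

variable {K : Type*} [Field K] {n : ℕ} {I J : Ideal (MvPolynomial (Fin n) K)}
  {M N : Set (Fin n →₀ ℕ)}

theorem StanleyDecomposition.sdepth_le_card (D : StanleyDecomposition K I) (i : Fin D.r) :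
    D.sdepth ≤ (D.Z i).card :=
  Finset.inf'_le _ (Finset.mem_univ i)

theorem StanleyDecomposition.sdepth_le (D : StanleyDecomposition K I) : D.sdepth ≤ n :=
  (D.sdepth_le_card ⟨0, D.rpos⟩).trans (card_finset_fin_le _)

theorem StanleyDecomposition.iUnion_stanleyCone (D : StanleyDecomposition K I)
    (hI : I.restrictScalars K = restrictSupport K M) :
    ⋃ i, stanleyCone (D.u i) (D.Z i) = M := by
  apply restrictSupport_injective (R := K)
  rw [restrictSupport_iUnion, ← hI, D.isSup]
  simp only [stanleySpace_eq_restrictSupport]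

theorem StanleyDecomposition.pairwise_disjoint_stanleyCone (D : StanleyDecomposition K I) :
    Pairwise (Function.onFun Disjoint fun i => stanleyCone (D.u i) (D.Z i)) := by
  rw [← iSupIndep_restrictSupport_iff (R := K)]
  simpa only [stanleySpace_eq_restrictSupport] using D.indep

theorem StanleyDecomposition.hasStanleyPartition (D : StanleyDecomposition K I)
    (hI : I.restrictScalars K = restrictSupport K M) : HasStanleyPartition M D.sdepth := by
  refine ⟨Finset.univ.image fun i => (D.u i, D.Z i), ?_, ?_, ?_⟩
  · simp only [Finset.mem_image, Finset.mem_univ, true_and]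
    rintro _ ⟨i, rfl⟩
    exact D.sdepth_le_card i
  · simp [← D.iUnion_stanleyCone hI]
  · rintro _ hp _ hq hpq
    obtain ⟨i, -, rfl⟩ := Finset.mem_image.mp hp
    obtain ⟨j, -, rfl⟩ := Finset.mem_image.mp hq
    exact D.pairwise_disjoint_stanleyCone fun hij => hpq (hij ▸ rfl)

theorem HasStanleyPartition.exists_stanleyDecomposition {d : ℕ} (hM : HasStanleyPartition M d)
    (hne : M.Nonempty) (hI : I.restrictScalars K = restrictSupport K M) :
    ∃ D : StanleyDecomposition K I, d ≤ D.sdepth := by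
  obtain ⟨P, hPd, rfl, hPdisj⟩ := hM
  have hP : 0 < P.card := by
    obtain ⟨c, hc⟩ := hne
    obtain ⟨p, hp, -⟩ := Set.mem_iUnion₂.mp hc
    exact Finset.card_pos.mpr ⟨p, hp⟩
  let e : Fin P.card ≃ P := P.equivFin.symm
  have hcover : ⋃ i, stanleyCone (e i).1.1 (e i).1.2 = ⋃ p ∈ P, stanleyCone p.1 p.2 := by
    rw [e.surjective.iUnion_comp (fun p : P => stanleyCone p.1.1 p.1.2), Set.iUnion_subtype]
  refine ⟨⟨P.card, hP, fun i => (e i).1.1, fun i => (e i).1.2, fun i => ?_, ?_, ?_⟩,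
    Finset.le_inf' _ _ fun i _ => hPd _ (e i).2⟩
  · rw [← Submodule.restrictScalars_mem K, hI, monomial_mem_restrictSupport, ← hcover]
    exact Or.inl (Set.mem_iUnion.mpr ⟨i, self_mem_stanleyCone _ _⟩)
  · simp only [stanleySpace_eq_restrictSupport, ← restrictSupport_iUnion, hcover, hI]
  · simp only [stanleySpace_eq_restrictSupport]
    refine iSupIndep_restrictSupport_iff.mpr fun i j hij => hPdisj (e i).2 (e j).2 ?_
    exact fun h => hij (e.injective (Subtype.ext h))

theorem Ideal.sdepth_le_sdepth_of_hasStanleyPartition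
    (hI : I.restrictScalars K = restrictSupport K M)
    (hJ : J.restrictScalars K = restrictSupport K N) (hN : N.Nonempty) (h : ∀ d, HasStanleyPartition M d → HasStanleyPartition N d) :
    I.sdepth K ≤ J.sdepth K := by
  refine csSup_le' ?_
  rintro _ ⟨D, rfl⟩
  obtain ⟨D', hD'⟩ := (h _ (D.hasStanleyPartition hI)).exists_stanleyDecomposition hN hJ
  exact hD'.trans (le_csSup ⟨n, by rintro _ ⟨D, rfl⟩; exact D.sdepth_le⟩ ⟨D', rfl⟩)

end Decomposition

section Shift

variable {σ : Type*} [DecidableEq σ] {x : σ} {w c : σ →₀ ℕ}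

theorem Finsupp.le_update_iff_of_apply_eq_zero (hw : w x = 0) {t : ℕ} :
    w ≤ c.update x t ↔ w ≤ c := by
  simp only [Finsupp.le_def, Finsupp.coe_update]
  rw [Function.forall_update_iff _ fun j s => w j ≤ s, hw]
  exact ⟨fun h j => (eq_or_ne j x).elim (fun hj => hj ▸ hw ▸ Nat.zero_le _) (h.2 j),
    fun h => ⟨Nat.zero_le _, fun j _ => h j⟩⟩

theorem Finsupp.single_add_le_iff (hw : w x = 0) {k : ℕ} :
    Finsupp.single x k + w ≤ c ↔ k ≤ c x ∧ w ≤ c := by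
  simp only [Finsupp.le_def, Finsupp.add_apply, Finsupp.single_apply]
  constructor
  · intro h
    refine ⟨by simpa [hw] using h x, fun j => ?_⟩
    have := h j
    split_ifs at this <;> omega
  · rintro ⟨hk, h⟩ j
    have := h j
    split_ifs with hj
    · subst hj
      omega
    · simpa using this

theorem preimage_update_setOf_exists_le {V : Set (σ →₀ ℕ)} (hw : w x = 0)
    (hV : ∀ v ∈ V, v x = 0) {g : ℕ → ℕ} {a b : ℕ} (hab : ∀ t, a ≤ g t ↔ b ≤ t) :
    (fun c => c.update x (g (c x))) ⁻¹' {c | ∃ s ∈ insert (Finsupp.single x a + w) V, s ≤ c} =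
      {c | ∃ s ∈ insert (Finsupp.single x b + w) V, s ≤ c} := by
  ext c
  simp only [mem_preimage, mem_ofPred_eq, exists_mem_insert, Finsupp.single_add_le_iff hw,
    Finsupp.le_update_iff_of_apply_eq_zero hw, Finsupp.update_apply, if_pos, hab]
  exact or_congr_right <| exists_congr fun v =>
    and_congr_right fun hv => Finsupp.le_update_iff_of_apply_eq_zero (hV v hv)

end Shift

theorem sdepth_span_le_of_exponent_shift {K : Type*} [Field K] {n : ℕ} {x : Fin n}
    {w : Fin n →₀ ℕ} {V : Set (Fin n →₀ ℕ)} (hw : w x = 0) (hV : ∀ v ∈ V, v x = 0)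
    {g : ℕ → ℕ} (hg : Monotone g) (hg' : Tendsto g atTop atTop) {a b : ℕ}
    (hab : ∀ t, a ≤ g t ↔ b ≤ t) :
    (Ideal.span ((monomial · (1 : K)) '' insert (Finsupp.single x a + w) V)).sdepth K ≤
      (Ideal.span ((monomial · (1 : K)) '' insert (Finsupp.single x b + w) V)).sdepth K := by
  refine Ideal.sdepth_le_sdepth_of_hasStanleyPartition (restrictScalars_span_monomial_image _)
    (restrictScalars_span_monomial_image _) ⟨_, _, mem_insert _ _, le_rfl⟩ fun d hd => ?_
  rw [← preimage_update_setOf_exists_le hw hV hab]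
  exact hd.preimage_update hg hg' x

/-- Let `v₁, …, vₘ` be monomials of `S = K[x₁,…,xₙ]` not involving `x₁`, and `a > 0`.
Then `sdepth (x₁^a v₁, v₂, …, vₘ) = sdepth (x₁^(a+1) v₁, v₂, …, vₘ)`. -/
theorem sdepth_step (n : ℕ) (hn : 2 ≤ n) (K : Type*) [Field K]
    (m : ℕ) (v₁ : Fin n →₀ ℕ) (v : Fin m → (Fin n →₀ ℕ))
    (hv₁ : v₁ ⟨0, by omega⟩ = 0) (hv : ∀ i, v i ⟨0, by omega⟩ = 0)
    (a : ℕ) (ha : 0 < a) :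
    Ideal.sdepth K (Ideal.span
      (insert (monomial (Finsupp.single ⟨0, by omega⟩ a + v₁) (1 : K))
        (Set.range fun i => monomial (v i) (1 : K)))) =
    Ideal.sdepth K (Ideal.span
      (insert (monomial (Finsupp.single ⟨0, by omega⟩ (a + 1) + v₁) (1 : K))
        (Set.range fun i => monomial (v i) (1 : K)))) := by
  set x : Fin n := ⟨0, by omega⟩
  have hgens (k : ℕ) : insert (monomial (Finsupp.single x k + v₁) (1 : K))
      (Set.range fun i => monomial (v i) (1 : K)) =
      (monomial · (1 : K)) '' insert (Finsupp.single x k + v₁) (Set.range v) := by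
    rw [Set.image_insert_eq, ← Set.range_comp]
    rfl
  have hV : ∀ w ∈ Set.range v, w x = 0 := by
    rintro _ ⟨i, rfl⟩
    exact hv i
  rw [hgens, hgens]
  apply le_antisymm
  · exact sdepth_span_le_of_exponent_shift hv₁ hV (g := fun t => if a ≤ t then t - 1 else t)
      (fun s t _ => by beta_reduce; split_ifs <;> omega)
      (tendsto_atTop_mono (fun t => by split_ifs <;> omega) (tendsto_sub_atTop_nat 1))
      fun t => by split_ifs <;> omega
  · exact sdepth_span_le_of_exponent_shift hv₁ hV (g := fun t => if a ≤ t then t + 1 else t)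
      (fun s t _ => by beta_reduce; split_ifs <;> omega)
      (tendsto_atTop_mono (fun t => by dsimp only [id_eq]; split_ifs <;> omega) tendsto_id)
      fun t => by split_ifs <;> omega
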